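/- Let H be a Hopf algebra over a field k, A ⊆ H a right coideal subalgebra, C = H/HA⁺ with projection π, and X an object of ᴴ𝓜ᶜ. Then the map δ_X : X → C ⊗ X, x ↦ x₍₋₁₎ ⊗ x₍₀₎ − π(1) ⊗ x, is left A-linear, where C ⊗ X carries the A-module structure restricted from its tensor product H-module structure. -/

import Mathlib

open TensorProduct

noncomputable section

universe v

section Coideal

variable {k : Type*} [Field k] {H : Type*} [Ring H] [HopfAlgebra k H]

/-- `A` is a right coideal subalgebra of `H`: `Δ(A) ⊆ A ⊗ H`. -/
def IsRightCoidealSubalgebra (A : Subalgebra k H) : Prop :=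
  ∀ a ∈ A, Coalgebra.comul (R := k) a ∈
    LinearMap.range (TensorProduct.map (Subalgebra.toSubmodule A).subtype
      (LinearMap.id (R := k) (M := H)))

/-- `A` is a left coideal subalgebra of `H`: `Δ(A) ⊆ H ⊗ A`. -/
def IsLeftCoidealSubalgebra (A : Subalgebra k H) : Prop :=
  ∀ a ∈ A, Coalgebra.comul (R := k) a ∈
    LinearMap.range (TensorProduct.map (LinearMap.id (R := k) (M := H))
      (Subalgebra.toSubmodule A).subtype)

end Coideal

section Hopf

variable {k : Type*} [Field k] {H : Type*} [Ring H] [HopfAlgebra k H]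

/-- The action of `H` on a module, as a `k`-bilinear map. -/
def sAct (Y : Type*) [AddCommGroup Y] [Module k Y] [Module H Y] [IsScalarTower k H Y] :
    H →ₗ[k] Module.End k Y :=
  LinearMap.mk₂ k (fun h y => h • y)
    (fun h h' y => add_smul h h' y)
    (fun c h y => smul_assoc c h y)
    (fun h y y' => smul_add h y y')
    (fun c h y => show h • c • y = c • h • y by
      rw [← algebraMap_smul H c y, smul_smul, ← Algebra.commutes, ← smul_smul, algebraMap_smul])

variable (A : Subalgebra k H)

/-- The augmentation ideal `A⁺ = Ker ε ∩ A` of a (coideal) subalgebra `A ⊆ H`. -/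
def aPlus : Set H := {a : H | a ∈ A ∧ Coalgebra.counit (R := k) a = 0}

/-- The left ideal `HA⁺` of `H` generated by `A⁺`. -/
def Iide : Submodule H H := Submodule.span H (aPlus A)

/-- The quotient `C = H / HA⁺`, a left `H`-module. -/
abbrev Cq := H ⧸ Iide A

/-- The canonical projection `π : H → C = H/HA⁺`. -/
def piC : H →ₗ[k] Cq A := LinearMap.restrictScalars k (Iide A).mkQ

/-- The diagonal action of `H` on a tensor product, through given actions on the two factors
and the comultiplication of `H`: `h • (y ⊗ z) = Σ h₍₁₎ • y ⊗ h₍₂₎ • z`. -/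
def hAct2 {Y Z : Type*} [AddCommGroup Y] [Module k Y] [AddCommGroup Z] [Module k Z]
    (sY : H →ₗ[k] Module.End k Y) (sZ : H →ₗ[k] Module.End k Z) :
    H →ₗ[k] Module.End k (Y ⊗[k] Z) :=
  (TensorProduct.homTensorHomMap (RingHom.id k) Y Z Y Z) ∘ₗ (TensorProduct.map sY sZ) ∘ₗ
    (Coalgebra.comul (R := k))

/-- The coaction of `C` on `C ⊗ Y` given by the comultiplication of `C` on the first factor. -/
def coactC (Y : Type*) [AddCommGroup Y] [Module k Y]
    (Δc : Cq A →ₗ[k] Cq A ⊗[k] Cq A) :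
    Cq A ⊗[k] Y →ₗ[k] Cq A ⊗[k] (Cq A ⊗[k] Y) :=
  (TensorProduct.assoc k (Cq A) (Cq A) Y).toLinearMap ∘ₗ LinearMap.rTensor Y Δc

/-- An object of the category `ᴴ𝓜ᶜ`: a left `H`-module `X` together with a left `C`-comodule
structure `coact : X → C ⊗ X` (coassociative and counital), which is left `H`-linear in the
sense that `(h • x)₍₋₁₎ ⊗ (h • x)₍₀₎ = h₍₁₎ • x₍₋₁₎ ⊗ h₍₂₎ • x₍₀₎`. -/
structure HMCObj (Δc : Cq A →ₗ[k] Cq A ⊗[k] Cq A) (εc : Cq A →ₗ[k] k)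
    (X : Type v) [AddCommGroup X] [Module k X] [Module H X] [IsScalarTower k H X] where
  /-- the coaction `x ↦ x₍₋₁₎ ⊗ x₍₀₎` -/
  coact : X →ₗ[k] Cq A ⊗[k] X
  counit_law : ∀ x : X,
    (TensorProduct.lid k X) ((LinearMap.rTensor X εc) (coact x)) = x
  coassoc : ∀ x : X,
    (TensorProduct.assoc k (Cq A) (Cq A) X) ((LinearMap.rTensor X Δc) (coact x)) =
      (LinearMap.lTensor (Cq A) coact) (coact x)
  hlinear : ∀ (h : H) (x : X),
    coact (h • x) = hAct2 (sAct (Cq A)) (sAct X) h (coact x)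

variable {A}

/-- The map `δ_X : X → C ⊗ X`, `x ↦ x₍₋₁₎ ⊗ x₍₀₎ - π(1) ⊗ x`. -/
def deltaX {X : Type*} [AddCommGroup X] [Module k X] (α : X →ₗ[k] Cq A ⊗[k] X) :
    X →ₗ[k] Cq A ⊗[k] X :=
  α - (TensorProduct.mk k (Cq A) X) (piC A 1)

/-- The coinvariants `ᶜᵒᶜX = {x | x₍₋₁₎ ⊗ x₍₀₎ = π(1) ⊗ x}`, as a `k`-submodule of `X`. -/
def coinv {X : Type*} [AddCommGroup X] [Module k X] (α : X →ₗ[k] Cq A ⊗[k] X) :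
    Submodule k X :=
  LinearMap.ker (deltaX α)

variable (A)

/-- The relations defining `H ⊗_A M` inside `H ⊗[k] M`, for a module `M` with a given
`A`-action `ρ`. -/
def genRel (M : Type*) [AddCommGroup M] [Module k M] (ρ : A → M → M) :
    Submodule k (H ⊗[k] M) :=
  Submodule.span k
    {t : H ⊗[k] M | ∃ (h : H) (a : A) (m : M), t = (h * (a : H)) ⊗ₜ[k] m - h ⊗ₜ[k] ρ a m}

/-- The relations defining `H ⊗_A S` inside `H ⊗[k] S` for a submodule `S ⊆ Y` stable under an
`A`-action `σ` on `Y`. -/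
def genRelS {Y : Type*} [AddCommGroup Y] [Module k Y] (S : Submodule k Y) (σ : A → Y → Y) :
    Submodule k (H ⊗[k] S) :=
  Submodule.span k
    {t : H ⊗[k] S | ∃ (h : H) (a : A) (y : S) (hy : σ a (y : Y) ∈ S),
      t = (h * (a : H)) ⊗ₜ[k] y - h ⊗ₜ[k] (⟨σ a (y : Y), hy⟩ : S)}

/-- The tensor product `H ⊗_A M`, presented as the quotient of `H ⊗[k] M` by relations
`R'`. -/
abbrev TensQ {M : Type*} [AddCommGroup M] [Module k M] (R' : Submodule k (H ⊗[k] M)) :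
    Type _ := (H ⊗[k] M) ⧸ R'

/-- Left multiplication by `b` on the first factor of `H ⊗[k] M`. -/
def mulLeftT (M : Type*) [AddCommGroup M] [Module k M] (b : H) :
    H ⊗[k] M →ₗ[k] H ⊗[k] M :=
  LinearMap.rTensor M (LinearMap.mulLeft k b)

lemma genRel_mulLeftT_le (M : Type*) [AddCommGroup M] [Module k M] (ρ : A → M → M) (b : H) :
    Submodule.map (mulLeftT M b) (genRel A M ρ) ≤ genRel A M ρ := by
  rw [genRel, Submodule.map_span, Submodule.span_le]
  rintro _ ⟨_, ⟨h, a, m, rfl⟩, rfl⟩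
  refine Submodule.subset_span ⟨b * h, a, m, ?_⟩
  simp [mulLeftT, mul_assoc]

lemma genRelS_mulLeftT_le {Y : Type*} [AddCommGroup Y] [Module k Y] (S : Submodule k Y)
    (σ : A → Y → Y) (b : H) :
    Submodule.map (mulLeftT (↥S) b) (genRelS A S σ) ≤ genRelS A S σ := by
  rw [genRelS, Submodule.map_span, Submodule.span_le]
  rintro _ ⟨_, ⟨h, a, y, hy, rfl⟩, rfl⟩
  refine Submodule.subset_span ⟨b * h, a, y, hy, ?_⟩
  simp [mulLeftT, mul_assoc]

/-- The left `H`-module structure on a quotient `(H ⊗[k] M) ⧸ R'`, when the relations `R'` are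
stable under left multiplication on the first factor: this is the `H`-action by left
multiplication on `H ⊗_A M`. -/
def hMulQ {M : Type*} [AddCommGroup M] [Module k M] (R' : Submodule k (H ⊗[k] M))
    (hR' : ∀ b : H, Submodule.map (mulLeftT M b) R' ≤ R') :
    H →ₗ[k] Module.End k ((H ⊗[k] M) ⧸ R') where
  toFun b := Submodule.mapQ R' R' (mulLeftT M b)
    (fun x hx => hR' b ⟨x, hx, rfl⟩)
  map_add' b b' := by
    apply Submodule.linearMap_qext
    apply TensorProduct.ext'
    intro h m
    simp [mulLeftT, add_mul, TensorProduct.add_tmul]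
  map_smul' c b := by
    apply Submodule.linearMap_qext
    apply TensorProduct.ext'
    intro h m
    simp only [mulLeftT, LinearMap.coe_comp, Function.comp_apply, Submodule.mkQ_apply,
      Submodule.mapQ_apply, LinearMap.rTensor_tmul, LinearMap.mulLeft_apply, RingHom.id_apply,
      LinearMap.smul_apply, smul_mul_assoc]
    rw [← TensorProduct.smul_tmul', Submodule.Quotient.mk_smul]

/-- The coaction `h ⊗ m ↦ π(h₍₁₎) ⊗ (h₍₂₎ ⊗ m)` on `H ⊗[k] M`, with values in
`C ⊗ ((H ⊗[k] M) ⧸ R')`. -/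
def indC0 {M : Type*} [AddCommGroup M] [Module k M] (R' : Submodule k (H ⊗[k] M)) :
    H ⊗[k] M →ₗ[k] Cq A ⊗[k] ((H ⊗[k] M) ⧸ R') :=
  (TensorProduct.map (piC A) R'.mkQ) ∘ₗ (TensorProduct.assoc k H H M).toLinearMap ∘ₗ
    (LinearMap.rTensor M (Coalgebra.comul (R := k)))

/-- The canonical map `H ⊗ X → C ⊗ X`, `h ⊗ x ↦ π(h₍₁₎) ⊗ h₍₂₎ • x`. -/
def kappa0 (X : Type*) [AddCommGroup X] [Module k X] [Module H X] [IsScalarTower k H X] :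
    H ⊗[k] X →ₗ[k] Cq A ⊗[k] X :=
  (TensorProduct.map (piC A) (TensorProduct.lift (sAct X))) ∘ₗ
    (TensorProduct.assoc k H H X).toLinearMap ∘ₗ
    (LinearMap.rTensor X (Coalgebra.comul (R := k)))

/-- The map `H ⊗ X → H ⊗ X`, `h ⊗ x ↦ h₍₁₎ ⊗ S(h₍₂₎) • x`. -/
def theta (X : Type*) [AddCommGroup X] [Module k X] [Module H X] [IsScalarTower k H X] :
    H ⊗[k] X →ₗ[k] H ⊗[k] X :=
  (LinearMap.lTensor H
      ((TensorProduct.lift (sAct X)) ∘ₗ (LinearMap.rTensor X (HopfAlgebra.antipode (R := k))))) ∘ₗ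
    (TensorProduct.assoc k H H X).toLinearMap ∘ₗ
    (LinearMap.rTensor X (Coalgebra.comul (R := k)))

/-- The map `∇_X : C ⊗ X → C ⊗ (C ⊗ X)`,
`π(h) ⊗ x ↦ π(h) ⊗ x₍₋₁₎ ⊗ x₍₀₎ - π(h₍₁₎) ⊗ π(h₍₂₎) ⊗ x`. -/
def nablaX (Δc : Cq A →ₗ[k] Cq A ⊗[k] Cq A) {X : Type*} [AddCommGroup X] [Module k X]
    (α : X →ₗ[k] Cq A ⊗[k] X) : Cq A ⊗[k] X →ₗ[k] Cq A ⊗[k] (Cq A ⊗[k] X) :=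
  LinearMap.lTensor (Cq A) α - coactC A X Δc

end Hopf

section CoidealQuotient

variable {k : Type*} [Field k] {H : Type*} [Ring H] [HopfAlgebra k H] (A : Subalgebra k H)

theorem piC_eq_counit_smul_of_mem {a : H} (ha : a ∈ A) :
    piC A a = Coalgebra.counit (R := k) a • piC A 1 := by
  have hmem : a - Coalgebra.counit (R := k) a • (1 : H) ∈ Iide A :=
    Submodule.subset_span ⟨A.sub_mem ha (A.smul_mem A.one_mem _), by simp⟩
  have hzero : piC A (a - Coalgebra.counit (R := k) a • (1 : H)) = 0 :=
    (Submodule.Quotient.mk_eq_zero (Iide A)).2 hmem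
  rwa [map_sub, map_smul, sub_eq_zero] at hzero

theorem smul_piC_one (b : H) : b • piC A 1 = piC A b := by
  change b • Submodule.Quotient.mk (1 : H) = Submodule.Quotient.mk b
  rw [← Submodule.Quotient.mk_smul, smul_eq_mul, mul_one]

/-- The first legs of `Δ a` lie in `A`, where `π = ε(-) π(1)`; the counit axiom then reassembles
`a`. -/
theorem rTensor_piC_comul_of_mem (hA : IsRightCoidealSubalgebra A) {a : H} (ha : a ∈ A) :
    LinearMap.rTensor H (piC A) (Coalgebra.comul (R := k) a) = piC A 1 ⊗ₜ[k] a := by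
  obtain ⟨t, ht⟩ := hA a ha
  have hmaps : LinearMap.rTensor H (piC A) ∘ₗ
        TensorProduct.map (Subalgebra.toSubmodule A).subtype LinearMap.id =
      TensorProduct.mk k (Cq A) H (piC A 1) ∘ₗ (TensorProduct.lid k H).toLinearMap ∘ₗ
        LinearMap.rTensor H (Coalgebra.counit (R := k)) ∘ₗ
        TensorProduct.map (Subalgebra.toSubmodule A).subtype LinearMap.id := by
    refine TensorProduct.ext' fun a' h => ?_
    simp [piC_eq_counit_smul_of_mem A a'.2, TensorProduct.smul_tmul]
  have := LinearMap.congr_fun hmaps t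
  simp only [LinearMap.coe_comp, Function.comp_apply, ht, Coalgebra.rTensor_counit_comul] at this
  rwa [LinearEquiv.coe_coe, TensorProduct.lid_tmul, one_smul] at this

theorem hAct2_piC_one_tmul (X : Type*) [AddCommGroup X] [Module k X] [Module H X]
    [IsScalarTower k H X] (h : H) (x : X) :
    hAct2 (sAct (Cq A)) (sAct X) h (piC A 1 ⊗ₜ[k] x) =
      TensorProduct.map LinearMap.id ((sAct X).flip x)
        (LinearMap.rTensor H (piC A) (Coalgebra.comul (R := k) h)) := by
  simp only [hAct2, LinearMap.coe_comp, Function.comp_apply]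
  induction Coalgebra.comul (R := k) h using TensorProduct.induction_on with
  | zero => simp
  | tmul h₁ h₂ => simp [sAct, smul_piC_one]
  | add s t hs ht => simp only [map_add, LinearMap.add_apply, hs, ht]

end CoidealQuotient

theorem deltaX_aLinear_general
    {k : Type*} [Field k] {H : Type*} [Ring H] [HopfAlgebra k H]
    (A : Subalgebra k H) (hA : IsRightCoidealSubalgebra A)
    (Δc : Cq A →ₗ[k] Cq A ⊗[k] Cq A) (εc : Cq A →ₗ[k] k)
    (X : Type v) [AddCommGroup X] [Module k X] [Module H X] [IsScalarTower k H X]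
    (o : HMCObj A Δc εc X) :
    ∀ (a : A) (x : X), deltaX o.coact ((a : H) • x) =
      hAct2 (sAct (Cq A)) (sAct X) (a : H) (deltaX o.coact x) := by
  intro a x
  have hπ : hAct2 (sAct (Cq A)) (sAct X) (a : H) (piC A 1 ⊗ₜ[k] x) =
      piC A 1 ⊗ₜ[k] ((a : H) • x) := by
    rw [hAct2_piC_one_tmul, rTensor_piC_comul_of_mem A hA a.2]
    rfl
  simp only [deltaX, LinearMap.sub_apply, TensorProduct.mk_apply, map_sub, o.hlinear, hπ]

/-- For an object `X` of `ᴴ𝓜ᶜ`, the map `δ_X : X → C ⊗ X`,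
`x ↦ x₍₋₁₎ ⊗ x₍₀₎ - π(1) ⊗ x` is left `A`-linear (it is `k`-linear by construction, and
commutes with the action of `A ⊆ H`, where `C ⊗ X` carries the `A`-module structure
restricted from its tensor product `H`-module structure). -/
theorem deltaX_aLinear
    {k : Type*} [Field k] {H : Type*} [Ring H] [HopfAlgebra k H]
    (A : Subalgebra k H) (hA : IsRightCoidealSubalgebra A)
    (Δc : Cq A →ₗ[k] Cq A ⊗[k] Cq A) (εc : Cq A →ₗ[k] k)
    (hΔc : ∀ h : H, Δc (piC A h) =
      TensorProduct.map (piC A) (piC A) (Coalgebra.comul (R := k) h))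
    (hεc : ∀ h : H, εc (piC A h) = Coalgebra.counit (R := k) h)
    (X : Type v) [AddCommGroup X] [Module k X] [Module H X] [IsScalarTower k H X]
    (o : HMCObj A Δc εc X) :
    ∀ (a : A) (x : X), deltaX o.coact ((a : H) • x) =
      hAct2 (sAct (Cq A)) (sAct X) (a : H) (deltaX o.coact x) :=
  deltaX_aLinear_general A hA Δc εc X o

end
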